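/- arXiv:1707.09305 — 2 statements merged into one kernel-verified Lean document; each statement's English description precedes it below -/
import Mathlib

section
/- Let G, A ⊆ ℝ^{d+1} be finite sets such that M(G) = ⋂_{a∈A} {x ∈ ℝ^{d+1} : x₀ − a₀ ≤ max(x_j − a_j : j ∈ {1,…,d})}. Then the closure of the complement ℝ^{d+1} \ M(G) equals ⋃_{a∈A} {x ∈ ℝ^{d+1} : x₀ − a₀ ≥ max(x_j − a_j : j ∈ {1,…,d})}, which equals −M(−A); in particular the closure of the complement of the monomial max-tropical cone M(G) is a min-tropical cone in ℝ^{d+1}. -/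
/-! Complementing the hypothesis turns `ℝ^{d+1} \ M(G)` into a finite union of open sectors
`{x : x_j - a_j < x₀ - a₀ for all j ≠ 0}`, and closure commutes with finite unions. Each open
sector is dense in the closed one, as pushing `x₀` up moves a point of the closed sector into
the open one. A coordinatewise min of two translates agrees in coordinate `0` with one of them
and lies below it elsewhere, so it stays in that translate's closed sector. -/

def Mcone {d : ℕ} (G : Set (Fin (d + 1) → ℝ)) : Set (Fin (d + 1) → ℝ) :=
  ⋃ g ∈ G, {x | ∀ j, j ≠ 0 → x 0 - g 0 ≤ x j - g j}

/-- `S ⊆ ℝ^{d+1}` is a min-tropical cone (closed under coordinatewise min of real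
translates), as in the real setting of the paper. -/
def IsMinTropConvexReal {d : ℕ} (S : Set (Fin (d + 1) → ℝ)) : Prop :=
  ∀ lam mu : ℝ, ∀ x ∈ S, ∀ y ∈ S, (fun k => min (lam + x k) (mu + y k)) ∈ S

open Filter Topology

section DomSector

variable {ι : Type*} (i₀ : ι)

def domSector (a : ι → ℝ) : Set (ι → ℝ) :=
  {x | ∀ j, j ≠ i₀ → x j - a j ≤ x i₀ - a i₀}

theorem isClosed_domSector (a : ι → ℝ) : IsClosed (domSector i₀ a) := by
  simp only [domSector, Set.ofPred_forall]
  exact isClosed_iInter fun j => isClosed_iInter fun _ => isClosed_le (by fun_prop) (by fun_prop)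

theorem closure_setOf_sub_lt_eq_domSector (a : ι → ℝ) :
    closure {x : ι → ℝ | ∀ j, j ≠ i₀ → x j - a j < x i₀ - a i₀} = domSector i₀ a := by
  classical
  refine subset_antisymm
    (closure_minimal (fun x hx j hj => (hx j hj).le) (isClosed_domSector i₀ a)) fun x hx => ?_
  have hlim : Tendsto (fun t : ℝ => x + Pi.single i₀ t) (𝓝[>] 0) (𝓝 x) := by
    refine tendsto_nhdsWithin_of_tendsto_nhds ?_
    have hcont : Continuous fun t : ℝ => x + Pi.single i₀ t :=
      continuous_const.add (continuous_single (A := fun _ : ι => ℝ) i₀)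
    simpa using hcont.tendsto 0
  refine mem_closure_of_tendsto hlim (eventually_nhdsWithin_of_forall fun t (ht : 0 < t) j hj => ?_)
  simp only [Pi.add_apply, Pi.single_eq_same, Pi.single_eq_of_ne hj, add_zero]
  linarith [hx j hj]

theorem compl_biInter_setOf_exists_le (A : Set (ι → ℝ)) :
    (⋂ a ∈ A, {x : ι → ℝ | ∃ j, j ≠ i₀ ∧ x i₀ - a i₀ ≤ x j - a j})ᶜ
      = ⋃ a ∈ A, {x | ∀ j, j ≠ i₀ → x j - a j < x i₀ - a i₀} := by
  ext x
  simp only [Set.mem_compl_iff, Set.mem_iInter, Set.mem_iUnion, Set.mem_ofPred_eq, not_forall]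
  push Not
  rfl

theorem closure_compl_biInter_eq_biUnion_domSector {A : Set (ι → ℝ)} (hA : A.Finite) :
    closure (⋂ a ∈ A, {x : ι → ℝ | ∃ j, j ≠ i₀ ∧ x i₀ - a i₀ ≤ x j - a j})ᶜ
      = ⋃ a ∈ A, domSector i₀ a := by
  rw [compl_biInter_setOf_exists_le, hA.closure_biUnion]
  exact Set.iUnion₂_congr fun a _ => closure_setOf_sub_lt_eq_domSector i₀ a

theorem min_mem_domSector {a x y : ι → ℝ} {lam mu : ℝ} (hx : x ∈ domSector i₀ a)
    (h : lam + x i₀ ≤ mu + y i₀) : (fun k => min (lam + x k) (mu + y k)) ∈ domSector i₀ a := by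
  intro j hj
  simp only [min_eq_left h]
  linarith [hx j hj, min_le_left (lam + x j) (mu + y j)]

end DomSector

theorem neg_preimage_Mcone_image_neg {d : ℕ} (A : Set (Fin (d + 1) → ℝ)) :
    (fun x => -x) ⁻¹' Mcone ((fun a => -a) '' A) = ⋃ a ∈ A, domSector 0 a := by
  ext x
  simp only [Mcone, domSector, Set.mem_preimage, Set.biUnion_image, Set.mem_iUnion,
    Set.mem_ofPred_eq, Pi.neg_apply, neg_sub_neg]
  refine exists₂_congr fun a _ => forall₂_congr fun j _ => ?_
  constructor <;> intro h <;> linarith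

theorem isMinTropConvexReal_biUnion_domSector {d : ℕ} (A : Set (Fin (d + 1) → ℝ)) :
    IsMinTropConvexReal (⋃ a ∈ A, domSector 0 a) := by
  intro lam mu x hx y hy
  simp only [Set.mem_iUnion] at hx hy ⊢
  obtain ⟨a, ha, hxa⟩ := hx
  obtain ⟨b, hb, hyb⟩ := hy
  rcases le_total (lam + x 0) (mu + y 0) with h | h
  · exact ⟨a, ha, min_mem_domSector 0 hxa h⟩
  · exact ⟨b, hb, by simpa only [min_comm] using min_mem_domSector 0 hyb h⟩

/-- If `M(G) = ⋂_{a∈A} {x : x₀ - a₀ ≤ max (x_j - a_j : j ∈ [d])}`, then the closure of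
the complement `ℝ^{d+1} \ M(G)` equals `⋃_{a∈A} {x : x₀ - a₀ ≥ max (x_j - a_j : j ∈ [d])}`,
which equals `-M(-A)`; in particular this closure is a min-tropical cone. -/
theorem complementary_monomial_cone {d : ℕ} (G A : Finset (Fin (d + 1) → ℝ))
    (hA : Mcone (G : Set (Fin (d + 1) → ℝ))
      = ⋂ a ∈ A, {x : Fin (d + 1) → ℝ | ∃ j, j ≠ 0 ∧ x 0 - a 0 ≤ x j - a j}) :
    closure ((Mcone (G : Set (Fin (d + 1) → ℝ)))ᶜ)
        = ⋃ a ∈ A, {x : Fin (d + 1) → ℝ | ∀ j, j ≠ 0 → x j - a j ≤ x 0 - a 0}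
    ∧ closure ((Mcone (G : Set (Fin (d + 1) → ℝ)))ᶜ)
        = (fun x => -x) ⁻¹' Mcone ((fun a => -a) '' (A : Set (Fin (d + 1) → ℝ)))
    ∧ IsMinTropConvexReal (closure ((Mcone (G : Set (Fin (d + 1) → ℝ)))ᶜ)) := by
  have hcl : closure (Mcone (G : Set (Fin (d + 1) → ℝ)))ᶜ = ⋃ a ∈ A, domSector 0 a := by
    rw [hA]
    exact closure_compl_biInter_eq_biUnion_domSector 0 A.finite_toSet
  refine ⟨hcl, hcl.trans (neg_preimage_Mcone_image_neg _).symm, ?_⟩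
  rw [hcl]
  exact isMinTropConvexReal_biUnion_domSector _
end

section
/- The complement in ℝ^{d+1} of the monomial max-tropical cone M(G) equals the open min-tropical cone ⋂_{g∈G} {x ∈ ℝ^{d+1} : x₀ − g₀ > min(x_j − g_j : j ∈ {1,…,d})}, and this intersection is min-tropically convex. -/
lemma mem_compl_Mcone {d : ℕ} (G : Finset (Fin (d + 1) → ℝ)) (x : Fin (d + 1) → ℝ) :
    x ∈ (Mcone (G : Set (Fin (d + 1) → ℝ)))ᶜ ↔
      ∀ g ∈ G, ∃ j, j ≠ 0 ∧ x j - g j < x 0 - g 0 := by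
  simp only [Mcone, Set.mem_compl_iff, Set.mem_iUnion, Set.mem_setOf_eq, not_exists]
  push_neg
  rfl

/-- The complement of the monomial max-tropical cone `M(G)` in `ℝ^{d+1}` equals the
open min-tropical cone `⋂_{g∈G} {x : x₀ - g₀ > min (x_j - g_j : j ∈ [d])}`, and this
set is min-tropically convex. -/
theorem complement_monomial_cone_open {d : ℕ} (G : Finset (Fin (d + 1) → ℝ))
    (hGne : G.Nonempty) :
    ((Mcone (G : Set (Fin (d + 1) → ℝ)))ᶜ
        = ⋂ g ∈ G, {x : Fin (d + 1) → ℝ | ∃ j, j ≠ 0 ∧ x j - g j < x 0 - g 0})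
    ∧ IsMinTropConvexReal ((Mcone (G : Set (Fin (d + 1) → ℝ)))ᶜ) := by
  constructor
  · ext x
    rw [mem_compl_Mcone]
    simp
  · intro lam mu x hx y hy
    rw [mem_compl_Mcone] at hx hy ⊢
    intro g hg
    rcases le_total (lam + x 0) (mu + y 0) with h | h
    · obtain ⟨j, hj, hlt⟩ := hx g hg
      refine ⟨j, hj, ?_⟩
      have h0 : min (lam + x 0) (mu + y 0) = lam + x 0 := min_eq_left h
      simp only [h0]
      calc min (lam + x j) (mu + y j) - g j ≤ lam + x j - g j := by
            have := min_le_left (lam + x j) (mu + y j); linarith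
        _ < lam + x 0 - g 0 := by linarith
    · obtain ⟨j, hj, hlt⟩ := hy g hg
      refine ⟨j, hj, ?_⟩
      have h0 : min (lam + x 0) (mu + y 0) = mu + y 0 := min_eq_right h
      simp only [h0]
      calc min (lam + x j) (mu + y j) - g j ≤ mu + y j - g j := by
            have := min_le_right (lam + x j) (mu + y j); linarith
        _ < mu + y 0 - g 0 := by linarith
end
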